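/- Let k ≥ 2 be an integer and c > 0 a real number. Let a₀, a₁, …, a_k and z be nonnegative reals satisfying Σ_{j=0}^{k} a_j = 1 and Σ_{j=0}^{k} j·a_j − z = k·(2k−3)/(2k−2) + c. Then a_{k−1}/k + a_k ≥ 1/2 + ((k−1)/k)·c. -/

import Mathlib

/-- The linear-programming bound underlying Lemma 3 of the paper. -/
theorem lp_bound
    (k : ℕ) (hk : 2 ≤ k) (c : ℝ) (hc : 0 < c)
    (a : ℕ → ℝ) (z : ℝ)
    (ha : ∀ j ≤ k, 0 ≤ a j) (hz : 0 ≤ z)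
    (hsum : ∑ j ∈ Finset.range (k + 1), a j = 1)
    (hweight : ∑ j ∈ Finset.range (k + 1), (j : ℝ) * a j - z =
      (k : ℝ) * (2 * (k : ℝ) - 3) / (2 * (k : ℝ) - 2) + c) :
    1 / 2 + (((k : ℝ) - 1) / (k : ℝ)) * c ≤ a (k - 1) / (k : ℝ) + a k := by
  have hK2 : (2:ℝ) ≤ (k:ℝ) := by exact_mod_cast hk
  set K : ℝ := (k:ℝ) with hKdef
  have hK0 : (0:ℝ) < K := by linarith
  have hK0' : K ≠ 0 := ne_of_gt hK0
  -- upper bound the weighted sum by the objective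
  have key : ∑ j ∈ Finset.range (k+1), ((2-K) + (K-1)/K * (j:ℝ)) * a j
      ≤ a (k-1)/K + a k := by
    have hk1 : k + 1 = (k-1) + 1 + 1 := by omega
    rw [hk1, Finset.sum_range_succ, Finset.sum_range_succ]
    have h1 : k - 1 + 1 = k := by omega
    rw [h1]
    have hcast : ((k-1 : ℕ):ℝ) = K - 1 := by
      push_cast [Nat.cast_sub (by omega : 1 ≤ k)]
      ring
    have hterm1 : ((2-K) + (K-1)/K * ((k-1:ℕ):ℝ)) * a (k-1) = a (k-1)/K := by
      rw [hcast]; field_simp; ring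
    have hterm2 : ((2-K) + (K-1)/K * (k:ℝ)) * a k = a k := by
      field_simp; ring
    have hneg : ∑ j ∈ Finset.range (k-1), ((2-K) + (K-1)/K * (j:ℝ)) * a j ≤ 0 := by
      apply Finset.sum_nonpos
      intro j hj
      have hjlt : j < k - 1 := Finset.mem_range.mp hj
      have haj : 0 ≤ a j := ha j (by omega)
      have hjle : (j:ℝ) ≤ K - 2 := by
        have : (j:ℝ) ≤ (k:ℝ) - 2 := by
          have : j ≤ k - 2 := by omega
          have h2 : ((j:ℕ):ℝ) ≤ ((k-2:ℕ):ℝ) := by exact_mod_cast this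
          rwa [Nat.cast_sub (by omega : 2 ≤ k), Nat.cast_ofNat] at h2
        exact this
      have hcoef : (2-K) + (K-1)/K * (j:ℝ) ≤ 0 := by
        have h : (K-1)/K * (j:ℝ) ≤ K - 2 := by
          rw [div_mul_eq_mul_div, div_le_iff₀ hK0]
          nlinarith [Nat.cast_nonneg (α := ℝ) j]
        linarith
      exact mul_nonpos_of_nonpos_of_nonneg hcoef haj
    linarith [hterm1, hterm2, hneg]
  -- lower bound the weighted sum using the constraints
  have hsplit : ∑ j ∈ Finset.range (k+1), ((2-K) + (K-1)/K * (j:ℝ)) * a j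
      = (2-K) * (∑ j ∈ Finset.range (k+1), a j)
        + (K-1)/K * (∑ j ∈ Finset.range (k+1), (j:ℝ) * a j) := by
    rw [Finset.mul_sum, Finset.mul_sum, ← Finset.sum_add_distrib]
    exact Finset.sum_congr rfl (fun j _ => by ring)
  have hw : ∑ j ∈ Finset.range (k+1), (j:ℝ) * a j
      = K * (2*K - 3) / (2*K - 2) + c + z := by linarith
  rw [hsplit, hsum, hw] at key
  have hu2 : 0 ≤ (K-1)/K := div_nonneg (by linarith) (le_of_lt hK0)
  have hzz : 0 ≤ (K-1)/K * z := mul_nonneg hu2 hz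
  have heq : (2-K) * 1 + (K-1)/K * (K * (2*K - 3) / (2*K - 2) + c + z)
      = 1/2 + (K-1)/K * c + (K-1)/K * z := by
    have h2K : 2*K - 2 ≠ 0 := by intro h; nlinarith
    have hK1 : K - 1 ≠ 0 := by intro h; linarith
    field_simp
    ring
  rw [heq] at key
  linarith
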